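/- Let Ω be a finite set, π a strictly positive probability vector on Ω, and p a transition rate kernel on Ω reversible with respect to π whose underlying graph is connected; set c(x,y) = π(x)p(x,y) for x ≠ y and c(x,x) = 0. Let Π : Ω → Ω̄ be a surjection onto a finite set Ω̄ such that whenever Π(x) = Π(x'): π(x) = π(x') and Σ_{y∈Π⁻¹(b)} p(x,y) = Σ_{y∈Π⁻¹(b)} p(x',y) for every b ∈ Ω̄. Let D : Ω → ℝ satisfy Σ_{x∈Ω} D(x) = 0 and D(x) = D(x') whenever Π(x) = Π(x'). Define D̄(a) = Σ_{x∈Π⁻¹(a)} D(x) and c̄(a,b) = Σ_{x∈Π⁻¹(a)} Σ_{y∈Π⁻¹(b)} c(x,y) for a ≠ b in Ω̄ (and c̄(a,a) = 0). Then the minimum of (1/2)·Σ_{x,y : c(x,y)>0} J(x,y)²/c(x,y) over all antisymmetric J : Ω × Ω → ℝ vanishing wherever c = 0 and satisfying D(x) + Σ_y J(x,y) = 0 for all x, equals the minimum of (1/2)·Σ_{a,b : c̄(a,b)>0} J̄(a,b)²/c̄(a,b) over all antisymmetric J̄ : Ω̄ × Ω̄ → ℝ vanishing wherever c̄ = 0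 and satisfying D̄(a) + Σ_b J̄(a,b) = 0 for all a. -/

import Mathlib

/-!
If `φ` solves the Poisson equation `D x + ∑ y, c x y (φ y - φ x) = 0`, its gradient flux
`c x y (φ y - φ x)` minimizes the kinetic energy among admissible fluxes: summation by parts
shows that every admissible flux has the same pairing with `∇φ`, and the pointwise Fenchel–Young
inequality `2 g j - c g² ≤ j² / c` then bounds the energy below by the Dirichlet energy of `φ`.

Solve the Poisson equation on the lumped graph `(Ωb, cb)` by some `ψ`; it is solvable because a
`cb`-harmonic function pulls back to a function on `Ω` that is constant along the edges of the
connected graph of `p`, hence is orthogonal to `Db`. By the symmetry assumptions the lifted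
potential `ψ ∘ proj` solves the Poisson equation on `Ω`, the equation at `proj x` being
`#(fiber of proj x)` times the one at `x`, and its Dirichlet energy is the lumped one after
summing over fibers.
-/

open Finset
open scoped Matrix

def kernelGraph {Ω : Type*} (p : Ω → Ω → ℝ) : SimpleGraph Ω where
  Adj x y := x ≠ y ∧ (0 < p x y ∨ 0 < p y x)
  symm := ⟨fun x y h => ⟨h.1.symm, h.2.symm⟩⟩
  loopless := ⟨fun x h => h.1 rfl⟩

theorem Matrix.IsHermitian.exists_mulVec_eq {ι : Type*} [Fintype ι] [DecidableEq ι]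
    {A : Matrix ι ι ℝ} (hA : A.IsHermitian) {v : ι → ℝ}
    (hv : ∀ w, A *ᵥ w = 0 → w ⬝ᵥ v = 0) : ∃ u, A *ᵥ u = v := by
  set T := Matrix.toEuclideanLin A
  have hT : T.IsSymmetric := Matrix.isSymmetric_toEuclideanLin_iff.2 hA
  have hrange : LinearMap.range T = (LinearMap.ker T)ᗮ := by
    rw [← hT.orthogonal_range, Submodule.orthogonal_orthogonal]
  have hv' : WithLp.toLp 2 v ∈ LinearMap.range T := by
    rw [hrange, Submodule.mem_orthogonal]
    intro w hw
    rw [EuclideanSpace.inner_eq_star_dotProduct, star_trivial, dotProduct_comm]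
    exact hv _ (congrArg WithLp.ofLp hw)
  obtain ⟨u, hu⟩ := hv'
  exact ⟨u.ofLp, congrArg WithLp.ofLp hu⟩

theorem two_mul_mul_sub_mul_sq_le {c j g : ℝ} (hc : 0 ≤ c) (hj : c = 0 → j = 0) :
    2 * g * j - c * g ^ 2 ≤ if 0 < c then j ^ 2 / c else 0 := by
  split_ifs with h
  · rw [le_div_iff₀ h]
    nlinarith [sq_nonneg (j - c * g)]
  · obtain rfl : c = 0 := le_antisymm (not_lt.1 h) hc
    simp [hj rfl]

section WeightedGraph

variable {α : Type*} (c : α → α → ℝ)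

def gradientFlux (φ : α → ℝ) (x y : α) : ℝ :=
  c x y * (φ y - φ x)

theorem gradientFlux_antisymm (hcs : ∀ x y, c x y = c y x) (φ : α → ℝ) (x y : α) :
    gradientFlux c φ x y = -gradientFlux c φ y x := by
  rw [gradientFlux, gradientFlux, hcs]
  ring

variable [Fintype α]

noncomputable section

def laplacian [DecidableEq α] : Matrix α α ℝ :=
  Matrix.of c - Matrix.diagonal fun x => ∑ y, c x y

def fluxEnergy (J : α → α → ℝ) : ℝ :=
  (1 / 2) * ∑ x, ∑ y, if 0 < c x y then J x y ^ 2 / c x y else 0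

def admissibleFluxEnergies (D : α → ℝ) : Set ℝ :=
  {v | ∃ J : α → α → ℝ,
    (∀ x y, J x y = - J y x) ∧
    (∀ x y, c x y = 0 → J x y = 0) ∧
    (∀ x, D x + ∑ y, J x y = 0) ∧
    v = fluxEnergy c J}

def dirichletEnergy (φ : α → ℝ) : ℝ :=
  (1 / 2) * ∑ x, ∑ y, c x y * (φ y - φ x) ^ 2

end

theorem laplacian_mulVec [DecidableEq α] (φ : α → ℝ) (x : α) :
    (laplacian c *ᵥ φ) x = ∑ y, gradientFlux c φ x y := by
  rw [laplacian, Matrix.sub_mulVec, Pi.sub_apply, Matrix.mulVec_diagonal, Finset.sum_mul]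
  simp [Matrix.mulVec, dotProduct, gradientFlux, mul_sub]

theorem laplacian_isHermitian [DecidableEq α] (hcs : ∀ x y, c x y = c y x) :
    (laplacian c).IsHermitian := by
  ext x y
  by_cases h : x = y
  · subst h
    simp [laplacian]
  · simp [laplacian, h, Ne.symm h, hcs y x]

theorem exists_potential (hcs : ∀ x y, c x y = c y x) (D : α → ℝ)
    (hD : ∀ χ : α → ℝ, (∀ x, ∑ y, gradientFlux c χ x y = 0) → ∑ x, χ x * D x = 0) :
    ∃ φ : α → ℝ, ∀ x, D x + ∑ y, gradientFlux c φ x y = 0 := by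
  classical
  obtain ⟨φ, hφ⟩ := (laplacian_isHermitian c hcs).exists_mulVec_eq (v := -D) fun χ hχ => by
    rw [dotProduct_neg, neg_eq_zero]
    exact hD χ fun x => by rw [← laplacian_mulVec, hχ, Pi.zero_apply]
  refine ⟨φ, fun x => ?_⟩
  rw [← laplacian_mulVec, hφ, Pi.neg_apply, add_neg_cancel]

theorem sum_sum_sub_mul_of_antisymm {K : α → α → ℝ} (hK : ∀ x y, K x y = -K y x) (φ : α → ℝ) :
    ∑ x, ∑ y, (φ y - φ x) * K x y = -2 * ∑ x, φ x * ∑ y, K x y := by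
  have hswap : ∑ x, ∑ y, φ y * K x y = -∑ x, φ x * ∑ y, K x y := by
    rw [Finset.sum_comm, ← Finset.sum_neg_distrib]
    refine sum_congr rfl fun y _ => ?_
    rw [Finset.mul_sum, ← Finset.sum_neg_distrib]
    exact sum_congr rfl fun x _ => by rw [hK]; ring
  simp_rw [sub_mul, Finset.sum_sub_distrib, hswap, ← Finset.mul_sum]
  ring

theorem sum_sum_sub_mul_of_divergence {D : α → ℝ} {K : α → α → ℝ}
    (hK : ∀ x y, K x y = -K y x) (hdiv : ∀ x, D x + ∑ y, K x y = 0) (φ : α → ℝ) :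
    ∑ x, ∑ y, (φ y - φ x) * K x y = 2 * ∑ x, φ x * D x := by
  simp_rw [sum_sum_sub_mul_of_antisymm hK, eq_neg_of_add_eq_zero_right (hdiv _), mul_neg,
    sum_neg_distrib]
  ring

theorem eq_of_harmonic (hc0 : ∀ x y, 0 ≤ c x y) (hcs : ∀ x y, c x y = c y x) {χ : α → ℝ}
    (hχ : ∀ x, ∑ y, gradientFlux c χ x y = 0) {x y : α} (hxy : 0 < c x y) : χ x = χ y := by
  have henergy : ∑ x, ∑ y, c x y * (χ y - χ x) ^ 2 = 0 := by
    have := sum_sum_sub_mul_of_antisymm (gradientFlux_antisymm c hcs χ) χ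
    simp only [hχ, mul_zero, sum_const_zero] at this
    rw [← this]
    exact sum_congr rfl fun x _ => sum_congr rfl fun y _ => by rw [gradientFlux]; ring
  have hrow := congrFun ((Fintype.sum_eq_zero_iff_of_nonneg fun x => sum_nonneg fun y _ =>
    mul_nonneg (hc0 x y) (sq_nonneg _)).1 henergy) x
  have hterm := congrFun ((Fintype.sum_eq_zero_iff_of_nonneg fun y =>
    mul_nonneg (hc0 x y) (sq_nonneg _)).1 hrow) y
  have hsq : (χ y - χ x) ^ 2 = 0 := (mul_eq_zero.1 hterm).resolve_left hxy.ne'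
  exact (sub_eq_zero.1 (pow_eq_zero_iff two_ne_zero |>.1 hsq)).symm

theorem fluxEnergy_gradientFlux (hc0 : ∀ x y, 0 ≤ c x y) (φ : α → ℝ) :
    fluxEnergy c (gradientFlux c φ) = dirichletEnergy c φ := by
  unfold fluxEnergy dirichletEnergy gradientFlux
  congr 1
  refine sum_congr rfl fun x _ => sum_congr rfl fun y _ => ?_
  split_ifs with h
  · field_simp
  · rw [le_antisymm (not_lt.1 h) (hc0 x y), zero_mul]

theorem dirichletEnergy_le_fluxEnergy (hc0 : ∀ x y, 0 ≤ c x y) (hcs : ∀ x y, c x y = c y x)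
    {D φ : α → ℝ} (hφ : ∀ x, D x + ∑ y, gradientFlux c φ x y = 0) {J : α → α → ℝ}
    (hJa : ∀ x y, J x y = - J y x) (hJ0 : ∀ x y, c x y = 0 → J x y = 0)
    (hJdiv : ∀ x, D x + ∑ y, J x y = 0) :
    dirichletEnergy c φ ≤ fluxEnergy c J := by
  have hJ := sum_sum_sub_mul_of_divergence hJa hJdiv φ
  have hgrad := sum_sum_sub_mul_of_divergence (gradientFlux_antisymm c hcs φ) hφ φ
  calc dirichletEnergy c φ
      = (1 / 2) * ∑ x, ∑ y, (2 * (φ y - φ x) * J x y - c x y * (φ y - φ x) ^ 2) := by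
        have hdirichlet : ∑ x, ∑ y, c x y * (φ y - φ x) ^ 2
            = ∑ x, ∑ y, (φ y - φ x) * gradientFlux c φ x y :=
          sum_congr rfl fun x _ => sum_congr rfl fun y _ => by rw [gradientFlux]; ring
        have hsplit : ∑ x, ∑ y, (2 * (φ y - φ x) * J x y - c x y * (φ y - φ x) ^ 2)
            = 2 * ∑ x, ∑ y, (φ y - φ x) * J x y - ∑ x, ∑ y, c x y * (φ y - φ x) ^ 2 := by
          simp only [Finset.mul_sum, ← Finset.sum_sub_distrib]
          exact sum_congr rfl fun x _ => sum_congr rfl fun y _ => by ring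
        rw [dirichletEnergy, hsplit]
        linarith
    _ ≤ fluxEnergy c J := by
        unfold fluxEnergy
        gcongr with x _ y _
        exact two_mul_mul_sub_mul_sq_le (hc0 x y) (hJ0 x y)

theorem isLeast_admissibleFluxEnergies (hc0 : ∀ x y, 0 ≤ c x y) (hcs : ∀ x y, c x y = c y x)
    {D φ : α → ℝ} (hφ : ∀ x, D x + ∑ y, gradientFlux c φ x y = 0) :
    IsLeast (admissibleFluxEnergies c D) (dirichletEnergy c φ) :=
  ⟨⟨gradientFlux c φ, gradientFlux_antisymm c hcs φ,
      fun x y h => by rw [gradientFlux, h, zero_mul], hφ, (fluxEnergy_gradientFlux c hc0 φ).symm⟩,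
    fun _ ⟨_, hJa, hJ0, hJdiv, hv⟩ => hv ▸ dirichletEnergy_le_fluxEnergy c hc0 hcs hφ hJa hJ0 hJdiv⟩

end WeightedGraph

section Lumping

variable {α β : Type*} [Fintype α] [DecidableEq β] (proj : α → β)

def fiber (b : β) : Finset α :=
  univ.filter (fun x => proj x = b)

def lumpedWeight (c : α → α → ℝ) (a b : β) : ℝ :=
  if a = b then 0 else ∑ x ∈ fiber proj a, ∑ y ∈ fiber proj b, c x y

theorem mem_fiber {x : α} {b : β} : x ∈ fiber proj b ↔ proj x = b := by
  simp [fiber]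

theorem sum_fiber_eq_card_mul {f : α → ℝ} (x : α) (hf : ∀ x', proj x' = proj x → f x' = f x) :
    ∑ x' ∈ fiber proj (proj x), f x' = (fiber proj (proj x)).card * f x := by
  rw [sum_eq_card_nsmul fun x' hx' => hf x' ((mem_fiber proj).1 hx'), nsmul_eq_mul]

variable (c : α → α → ℝ)

theorem lumpedWeight_symm (hcs : ∀ x y, c x y = c y x) (a b : β) :
    lumpedWeight proj c a b = lumpedWeight proj c b a := by
  unfold lumpedWeight
  by_cases h : a = b
  · rw [if_pos h, if_pos h.symm]
  · rw [if_neg h, if_neg (Ne.symm h), Finset.sum_comm]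
    exact sum_congr rfl fun y _ => sum_congr rfl fun x _ => hcs x y

theorem lumpedWeight_nonneg (hc0 : ∀ x y, 0 ≤ c x y) (a b : β) : 0 ≤ lumpedWeight proj c a b := by
  unfold lumpedWeight
  split_ifs
  exacts [le_rfl, sum_nonneg fun x _ => sum_nonneg fun y _ => hc0 x y]

theorem lumpedWeight_pos (hc0 : ∀ x y, 0 ≤ c x y) {x y : α} (hxy : proj x ≠ proj y)
    (hpos : 0 < c x y) : 0 < lumpedWeight proj c (proj x) (proj y) := by
  rw [lumpedWeight, if_neg hxy]
  refine sum_pos' (fun x' _ => sum_nonneg fun y' _ => hc0 x' y') ⟨x, (mem_fiber proj).2 rfl, ?_⟩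
  exact sum_pos' (fun y' _ => hc0 x y') ⟨y, (mem_fiber proj).2 rfl, hpos⟩

variable [Fintype β]

theorem sum_mul_comp_eq_sum_fiber (w : α → ℝ) (g : β → ℝ) :
    ∑ y, w y * g (proj y) = ∑ b, (∑ y ∈ fiber proj b, w y) * g b := by
  rw [← sum_fiberwise univ proj]
  refine sum_congr rfl fun b _ => ?_
  rw [Finset.sum_mul]
  exact sum_congr rfl fun y hy => by rw [(mem_fiber proj).1 hy]

theorem dirichletEnergy_comp (ψ : β → ℝ) :
    dirichletEnergy c (ψ ∘ proj) = dirichletEnergy (lumpedWeight proj c) ψ := by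
  unfold dirichletEnergy
  congr 1
  calc ∑ x, ∑ y, c x y * (ψ (proj y) - ψ (proj x)) ^ 2
      = ∑ b, ∑ x, (∑ y ∈ fiber proj b, c x y) * (ψ b - ψ (proj x)) ^ 2 := by
        refine (sum_congr rfl fun x _ => ?_).trans Finset.sum_comm
        exact sum_mul_comp_eq_sum_fiber proj (c x) (fun b => (ψ b - ψ (proj x)) ^ 2)
    _ = ∑ b, ∑ a, (∑ x ∈ fiber proj a, ∑ y ∈ fiber proj b, c x y) * (ψ b - ψ a) ^ 2 :=
        sum_congr rfl fun b _ => sum_mul_comp_eq_sum_fiber proj _ (fun a => (ψ b - ψ a) ^ 2)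
    _ = ∑ a, ∑ b, lumpedWeight proj c a b * (ψ b - ψ a) ^ 2 := by
        rw [Finset.sum_comm]
        refine sum_congr rfl fun a _ => sum_congr rfl fun b _ => ?_
        rw [lumpedWeight]
        split_ifs with h
        · rw [h, sub_self, zero_pow two_ne_zero, mul_zero, zero_mul]
        · rfl

theorem exists_lumpedWeight_potential (hc0 : ∀ x y, 0 ≤ c x y) (hcs : ∀ x y, c x y = c y x)
    (G : SimpleGraph α) (hG : G.Connected) (hadj : ∀ x y, G.Adj x y → 0 < c x y)
    (D : α → ℝ) (hD : ∑ x, D x = 0) :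
    ∃ ψ : β → ℝ,
      ∀ a, (∑ x ∈ fiber proj a, D x) + ∑ b, gradientFlux (lumpedWeight proj c) ψ a b = 0 := by
  refine exists_potential _ (lumpedWeight_symm proj c hcs) _ fun χ hχ => ?_
  have hadjχ : ∀ x y, G.Adj x y → χ (proj x) = χ (proj y) := fun x y h => by
    by_cases hxy : proj x = proj y
    · rw [hxy]
    · exact eq_of_harmonic _ (lumpedWeight_nonneg proj c hc0) (lumpedWeight_symm proj c hcs) hχ
        (lumpedWeight_pos proj c hc0 hxy (hadj x y h))
  obtain ⟨x₀⟩ := hG.nonempty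
  have hconst : ∀ x, χ (proj x) = χ (proj x₀) := fun x => by
    obtain ⟨w⟩ := hG.preconnected x x₀
    induction w with
    | nil => rfl
    | cons h _ ih => exact (hadjχ _ _ h).trans ih
  calc ∑ a, χ a * ∑ x ∈ fiber proj a, D x = ∑ x, D x * χ (proj x) := by
        rw [sum_mul_comp_eq_sum_fiber]
        exact sum_congr rfl fun a _ => mul_comm _ _
    _ = ∑ x, D x * χ (proj x₀) := sum_congr rfl fun x _ => by rw [hconst]
    _ = 0 := by rw [← sum_mul, hD, zero_mul]

theorem divergence_gradientFlux_comp
    (hcinv : ∀ x x' b, proj x = proj x' → proj x ≠ b →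
      ∑ y ∈ fiber proj b, c x y = ∑ y ∈ fiber proj b, c x' y)
    {D : α → ℝ} (hDinv : ∀ x x', proj x = proj x' → D x = D x') {ψ : β → ℝ}
    (hψ : ∀ a, (∑ x ∈ fiber proj a, D x) + ∑ b, gradientFlux (lumpedWeight proj c) ψ a b = 0)
    (x : α) : D x + ∑ y, gradientFlux c (ψ ∘ proj) x y = 0 := by
  set N : ℝ := ((fiber proj (proj x)).card : ℝ)
  have hN : 0 < N := by
    simp only [N, Nat.cast_pos, card_pos]
    exact ⟨x, (mem_fiber proj).2 rfl⟩
  have hD : ∑ x' ∈ fiber proj (proj x), D x' = N * D x :=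
    sum_fiber_eq_card_mul proj x fun x' hx' => hDinv x' x hx'
  have hrow : ∀ b, gradientFlux (lumpedWeight proj c) ψ (proj x) b
      = N * ((∑ y ∈ fiber proj b, c x y) * (ψ b - ψ (proj x))) := fun b => by
    rw [gradientFlux, lumpedWeight]
    split_ifs with h
    · simp [h]
    · rw [sum_fiber_eq_card_mul proj x fun x' hx' => hcinv x' x b hx' (hx' ▸ h), mul_assoc]
  have hflux : ∑ y, gradientFlux c (ψ ∘ proj) x y
      = ∑ b, (∑ y ∈ fiber proj b, c x y) * (ψ b - ψ (proj x)) :=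
    sum_mul_comp_eq_sum_fiber proj (c x) (fun b => ψ b - ψ (proj x))
  have hscaled : N * (D x + ∑ y, gradientFlux c (ψ ∘ proj) x y) = 0 := by
    rw [← hψ (proj x), hD, hflux, mul_add, Finset.mul_sum]
    simp only [hrow]
  exact (mul_eq_zero.1 hscaled).resolve_left hN.ne'

end Lumping

section ReversibleKernel

variable {Ω : Type*} [DecidableEq Ω] (π : Ω → ℝ) (p : Ω → Ω → ℝ)

def edgeWeight (x y : Ω) : ℝ :=
  if x = y then 0 else π x * p x y

theorem edgeWeight_symm (hrev : ∀ x y, π x * p x y = π y * p y x) (x y : Ω) :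
    edgeWeight π p x y = edgeWeight π p y x := by
  unfold edgeWeight
  by_cases h : x = y
  · rw [if_pos h, if_pos h.symm]
  · rw [if_neg h, if_neg (Ne.symm h), hrev]

theorem edgeWeight_nonneg (hπ : ∀ x, 0 ≤ π x) (hp : ∀ x y, x ≠ y → 0 ≤ p x y) (x y : Ω) :
    0 ≤ edgeWeight π p x y := by
  unfold edgeWeight
  split_ifs with h
  exacts [le_rfl, mul_nonneg (hπ x) (hp x y h)]

theorem edgeWeight_pos_of_adj (hπ : ∀ x, 0 < π x) (hrev : ∀ x y, π x * p x y = π y * p y x)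
    {x y : Ω} (hxy : (kernelGraph p).Adj x y) : 0 < edgeWeight π p x y := by
  obtain ⟨hne, hpos | hpos⟩ := hxy
  · rw [edgeWeight, if_neg hne]
    exact mul_pos (hπ x) hpos
  · rw [edgeWeight, if_neg hne, hrev]
    exact mul_pos (hπ y) hpos

variable {β : Type*} [Fintype Ω] [DecidableEq β] (proj : Ω → β)

theorem sum_fiber_edgeWeight {x : Ω} {b : β} (hb : proj x ≠ b) :
    ∑ y ∈ fiber proj b, edgeWeight π p x y = π x * ∑ y ∈ fiber proj b, p x y := by
  rw [Finset.mul_sum]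
  refine sum_congr rfl fun y hy => ?_
  rw [edgeWeight, if_neg]
  rintro rfl
  exact hb ((mem_fiber proj).1 hy)

theorem sum_fiber_edgeWeight_eq (hπinv : ∀ x x', proj x = proj x' → π x = π x')
    (hpinv : ∀ x x' b, proj x = proj x' →
      ∑ y ∈ fiber proj b, p x y = ∑ y ∈ fiber proj b, p x' y)
    {x x' : Ω} {b : β} (hxx' : proj x = proj x') (hb : proj x ≠ b) :
    ∑ y ∈ fiber proj b, edgeWeight π p x y = ∑ y ∈ fiber proj b, edgeWeight π p x' y := by
  rw [sum_fiber_edgeWeight π p proj hb, sum_fiber_edgeWeight π p proj (hxx' ▸ hb),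
    hπinv x x' hxx', hpinv x x' b hxx']

end ReversibleKernel

theorem symmetry_reduction_flux_general {Ω Ωb : Type*} [Fintype Ω] [Fintype Ωb]
    [DecidableEq Ω] [DecidableEq Ωb]
    (π : Ω → ℝ) (p : Ω → Ω → ℝ)
    (hπpos : ∀ x, 0 < π x)
    (hp : ∀ x y, x ≠ y → 0 ≤ p x y)
    (hrev : ∀ x y, π x * p x y = π y * p y x)
    (hconn : (kernelGraph p).Connected)
    (c : Ω → Ω → ℝ) (hc : ∀ x y, c x y = if x = y then 0 else π x * p x y)
    (proj : Ω → Ωb)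
    (hπinv : ∀ x x', proj x = proj x' → π x = π x')
    (hpinv : ∀ x x' (b : Ωb), proj x = proj x' →
      ∑ y ∈ univ.filter (fun y => proj y = b), p x y =
      ∑ y ∈ univ.filter (fun y => proj y = b), p x' y)
    (D : Ω → ℝ) (hD : ∑ x, D x = 0)
    (hDinv : ∀ x x', proj x = proj x' → D x = D x')
    (Db : Ωb → ℝ) (hDb : ∀ a, Db a = ∑ x ∈ univ.filter (fun x => proj x = a), D x)
    (cb : Ωb → Ωb → ℝ)
    (hcb : ∀ a b, cb a b = if a = b then 0 else
      ∑ x ∈ univ.filter (fun x => proj x = a),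
        ∑ y ∈ univ.filter (fun y => proj y = b), c x y) :
    ∃ m : ℝ,
      IsLeast {v : ℝ | ∃ J : Ω → Ω → ℝ,
        (∀ x y, J x y = - J y x) ∧
        (∀ x y, c x y = 0 → J x y = 0) ∧
        (∀ x, D x + ∑ y, J x y = 0) ∧
        v = (1 / 2) * ∑ x, ∑ y, if 0 < c x y then J x y ^ 2 / c x y else 0} m ∧
      IsLeast {v : ℝ | ∃ Jb : Ωb → Ωb → ℝ,
        (∀ a b, Jb a b = - Jb b a) ∧
        (∀ a b, cb a b = 0 → Jb a b = 0) ∧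
        (∀ a, Db a + ∑ b, Jb a b = 0) ∧
        v = (1 / 2) * ∑ a, ∑ b, if 0 < cb a b then Jb a b ^ 2 / cb a b else 0} m := by
  obtain rfl : c = edgeWeight π p := funext₂ hc
  obtain rfl : cb = lumpedWeight proj (edgeWeight π p) := funext₂ hcb
  obtain rfl : Db = fun a => ∑ x ∈ fiber proj a, D x := funext hDb
  have hcs := edgeWeight_symm π p hrev
  have hc0 := edgeWeight_nonneg π p (fun x => (hπpos x).le) hp
  obtain ⟨ψ, hψ⟩ := exists_lumpedWeight_potential proj _ hc0 hcs (kernelGraph p) hconn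
    (fun _ _ => edgeWeight_pos_of_adj π p hπpos hrev) D hD
  have hlift := divergence_gradientFlux_comp proj _
    (fun _ _ _ => sum_fiber_edgeWeight_eq π p proj hπinv hpinv) hDinv hψ
  refine ⟨dirichletEnergy _ ψ, ?_, isLeast_admissibleFluxEnergies _
    (lumpedWeight_nonneg proj _ hc0) (lumpedWeight_symm proj _ hcs) hψ⟩
  rw [← dirichletEnergy_comp]
  exact isLeast_admissibleFluxEnergies _ hc0 hcs hlift

/-- Symmetry reduction preserves the flux-formulation minimum (squared metric
derivative): the minimal kinetic energy on `Ω` equals that on the projected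
space `Ωb`, and both minima are attained. -/
theorem symmetry_reduction_flux {Ω Ωb : Type*} [Fintype Ω] [Fintype Ωb]
    [DecidableEq Ω] [DecidableEq Ωb]
    (π : Ω → ℝ) (p : Ω → Ω → ℝ)
    (hπpos : ∀ x, 0 < π x) (hπsum : ∑ x, π x = 1)
    (hp : ∀ x y, x ≠ y → 0 ≤ p x y) (hrow : ∀ x, ∑ y, p x y = 0)
    (hrev : ∀ x y, π x * p x y = π y * p y x)
    (hconn : (kernelGraph p).Connected)
    (c : Ω → Ω → ℝ) (hc : ∀ x y, c x y = if x = y then 0 else π x * p x y)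
    (proj : Ω → Ωb) (hsurj : Function.Surjective proj)
    (hπinv : ∀ x x', proj x = proj x' → π x = π x')
    (hpinv : ∀ x x' (b : Ωb), proj x = proj x' →
      ∑ y ∈ univ.filter (fun y => proj y = b), p x y =
      ∑ y ∈ univ.filter (fun y => proj y = b), p x' y)
    (D : Ω → ℝ) (hD : ∑ x, D x = 0)
    (hDinv : ∀ x x', proj x = proj x' → D x = D x')
    (Db : Ωb → ℝ) (hDb : ∀ a, Db a = ∑ x ∈ univ.filter (fun x => proj x = a), D x)
    (cb : Ωb → Ωb → ℝ)
    (hcb : ∀ a b, cb a b = if a = b then 0 else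
      ∑ x ∈ univ.filter (fun x => proj x = a),
        ∑ y ∈ univ.filter (fun y => proj y = b), c x y) :
    ∃ m : ℝ,
      IsLeast {v : ℝ | ∃ J : Ω → Ω → ℝ,
        (∀ x y, J x y = - J y x) ∧
        (∀ x y, c x y = 0 → J x y = 0) ∧
        (∀ x, D x + ∑ y, J x y = 0) ∧
        v = (1 / 2) * ∑ x, ∑ y, if 0 < c x y then J x y ^ 2 / c x y else 0} m ∧
      IsLeast {v : ℝ | ∃ Jb : Ωb → Ωb → ℝ,
        (∀ a b, Jb a b = - Jb b a) ∧
        (∀ a b, cb a b = 0 → Jb a b = 0) ∧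
        (∀ a, Db a + ∑ b, Jb a b = 0) ∧
        v = (1 / 2) * ∑ a, ∑ b, if 0 < cb a b then Jb a b ^ 2 / cb a b else 0} m :=
  symmetry_reduction_flux_general π p hπpos hp hrev hconn c hc proj hπinv hpinv D hD hDinv Db hDb cb
    hcb
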